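/- Let (K, K^∨) be a pair of dual reflexive Gorenstein cones of index k with deg^∨ = (1/2)(s_1 + ⋯ + s_{2r}) + t_1 + ⋯ + t_{k−r}, where the s_i, t_j ∈ K^∨_(1) are linearly independent, and let T = {x ∈ K : ⟨x, s_i⟩ = 1 and ⟨x, t_j⟩ = 1 for all i, j} − deg (the translate by −deg). Then T = {x ∈ ℝ^d : ⟨x, s_i⟩ = 0 for all i, ⟨x, t_j⟩ = 0 for all j, and ⟨x, n⟩ ≥ −1 for every n ∈ K^∨_(1)}. (That is, T is the dual polytope of the image Θ of the convex hull of K^∨_(1) in the quotient by the span of the s_i and t_j.) -/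

import Mathlib

/-!
The inclusion `⊆` only uses `⟨deg, n⟩ = 1` for `n ∈ K^∨_(1)`. Conversely, if `y` lies in the
right-hand side then `y + deg` pairs nonnegatively with `K^∨_(1)`, which generates `K^∨`, so
`y + deg ∈ K` by Farkas' lemma. Farkas applies because a cone generated by finitely many points
on the hyperplane `⟨·, deg^∨⟩ = 1` is closed: below any level of `⟨·, deg^∨⟩` its conic
coefficients are bounded, so it is locally the image of a compact box.
-/

open scoped BigOperators Pointwise

noncomputable section

/-- The standard pairing `⟨x, y⟩ = ∑ i, x i * y i` on `ℝ^d`. -/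
def pairR {d : ℕ} (x y : Fin d → ℝ) : ℝ := ∑ i, x i * y i

/-- A point of `ℝ^d` is a lattice point if all of its coordinates are integers. -/
def IsLatticePoint {d : ℕ} (x : Fin d → ℝ) : Prop := ∀ i, ∃ z : ℤ, x i = (z : ℝ)

/-- The dual cone `K^∨ = {y : ⟨x, y⟩ ≥ 0 for all x ∈ K}`. -/
def dualCone {d : ℕ} (K : Set (Fin d → ℝ)) : Set (Fin d → ℝ) :=
  { y | ∀ x ∈ K, 0 ≤ pairR x y }

/-- A Gorenstein cone with degree element `n` (a lattice point): the set of all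
nonnegative real linear combinations of a finite set of lattice points, each pairing
to `1` with `n`, such that `K ∩ (−K) = {0}` and `span K = ℝ^d`. -/
def IsGorensteinCone {d : ℕ} (K : Set (Fin d → ℝ)) (n : Fin d → ℝ) : Prop :=
  IsLatticePoint n ∧
  (∃ S : Finset (Fin d → ℝ),
      (∀ v ∈ S, IsLatticePoint v ∧ pairR v n = 1) ∧
      K = { x | ∃ c : (Fin d → ℝ) → ℝ, (∀ v, 0 ≤ c v) ∧ x = ∑ v ∈ S, c v • v }) ∧
  K ∩ (-K) = {0} ∧
  Submodule.span ℝ K = ⊤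

/-- `K_(1)`: the lattice points `m ∈ K` with `⟨m, deg^∨⟩ = 1`. -/
def Kone {d : ℕ} (K : Set (Fin d → ℝ)) (degVee : Fin d → ℝ) : Set (Fin d → ℝ) :=
  { m | IsLatticePoint m ∧ m ∈ K ∧ pairR m degVee = 1 }

/-- `K^∨_(1)`: the lattice points `n ∈ K^∨` with `⟨deg, n⟩ = 1`. -/
def KvOne {d : ℕ} (K : Set (Fin d → ℝ)) (deg : Fin d → ℝ) : Set (Fin d → ℝ) :=
  { n | IsLatticePoint n ∧ n ∈ dualCone K ∧ pairR deg n = 1 }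

open Set PointedCone

namespace PointedCone

variable {E : Type*} [AddCommGroup E] [Module ℝ E]

lemma coe_hull_finset (S : Finset E) :
    (hull ℝ (S : Set E) : Set E) =
      { x | ∃ c : E → ℝ, (∀ v, 0 ≤ c v) ∧ x = ∑ v ∈ S, c v • v } := by
  ext x
  constructor
  · intro hx
    obtain ⟨f, -, rfl⟩ := Submodule.mem_span_finset.mp hx
    exact ⟨fun v => f v, fun v => (f v).2, rfl⟩
  · rintro ⟨c, hc, rfl⟩
    exact Submodule.sum_mem _ fun v hv => (hull ℝ _).smul_mem (hc v) (subset_hull hv)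

lemma nonneg_of_mem_hull {s : Set E} {f : E →ₗ[ℝ] ℝ} (hf : ∀ v ∈ s, 0 ≤ f v) {x : E}
    (hx : x ∈ hull ℝ s) : 0 ≤ f x :=
  (Submodule.span_le (p := (positive ℝ ℝ).comap f)).mpr hf hx

variable [TopologicalSpace E] [IsTopologicalAddGroup E] [ContinuousSMul ℝ E] [T2Space E]

lemma isClosed_hull_finset {S : Finset E} (φ : StrongDual ℝ E)
    (hS : ∀ v ∈ S, φ v = 1) : IsClosed (hull ℝ (S : Set E) : Set E) := by
  set g : (S → ℝ) → E := fun c => ∑ v, c v • (v : E)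
  have hg : Continuous g :=
    continuous_finsetSum _ fun v _ => (continuous_apply v).smul continuous_const
  have hφg (c : S → ℝ) : φ (g c) = ∑ v, c v := by
    simp [g, map_sum, hS _ (Subtype.prop _)]
  refine closure_subset_iff_isClosed.mp fun x hx => ?_
  set M := φ x + 1
  -- `φ` maps a conic combination to the sum of its coefficients, which bounds each of them.
  have hbounded : φ ⁻¹' Iio M ∩ hull ℝ (S : Set E) ⊆ g '' Icc 0 fun _ => M := by
    rintro y ⟨hyM, hy⟩
    obtain ⟨f, rfl⟩ := Submodule.mem_span_finset'.mp hy
    refine ⟨fun v => f v, ⟨fun v => (f v).2, fun v => ?_⟩, rfl⟩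
    calc (f v : ℝ) ≤ ∑ w, (f w : ℝ) :=
          Finset.single_le_sum (fun w _ => (f w).2) (Finset.mem_univ v)
      _ = φ (g fun w => f w) := (hφg _).symm
      _ ≤ M := hyM.le
  have hxM : x ∈ closure (g '' Icc 0 fun _ => M) :=
    closure_mono hbounded
      ((isOpen_Iio.preimage φ.continuous).inter_closure ⟨by simp [M], hx⟩)
  rw [(isCompact_Icc.image hg).isClosed.closure_eq] at hxM
  obtain ⟨c, hc, rfl⟩ := hxM
  exact Submodule.sum_mem _ fun v _ => (hull ℝ _).smul_mem (hc.1 v) (subset_hull v.2)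

variable [LocallyConvexSpace ℝ E]

lemma mem_hull_finset_of_forall_nonneg {S : Finset E} (φ : StrongDual ℝ E)
    (hS : ∀ v ∈ S, φ v = 1) {x : E}
    (hx : ∀ f : StrongDual ℝ E, (∀ y ∈ hull ℝ (S : Set E), 0 ≤ f y) → 0 ≤ f x) :
    x ∈ hull ℝ (S : Set E) := by
  by_contra hxS
  obtain ⟨f, hfC, hfx⟩ :=
    ProperCone.hyperplane_separation_point ⟨hull ℝ (S : Set E), isClosed_hull_finset φ hS⟩ hxS
  exact (hx f hfC).not_gt hfx

end PointedCone

lemma pairR_eq_dotProduct {d : ℕ} (x y : Fin d → ℝ) : pairR x y = x ⬝ᵥ y := rfl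

lemma pairR_comm {d : ℕ} (x y : Fin d → ℝ) : pairR x y = pairR y x := dotProduct_comm x y

lemma pairR_add_left {d : ℕ} (x y z : Fin d → ℝ) : pairR (x + y) z = pairR x z + pairR y z :=
  add_dotProduct x y z

lemma pairR_sub_left {d : ℕ} (x y z : Fin d → ℝ) : pairR (x - y) z = pairR x z - pairR y z :=
  sub_dotProduct x y z

namespace IsGorensteinCone

variable {d : ℕ} {K : Set (Fin d → ℝ)} {n : Fin d → ℝ}

lemma exists_finset_eq_hull (hK : IsGorensteinCone K n) :
    ∃ S : Finset (Fin d → ℝ), (∀ v ∈ S, IsLatticePoint v ∧ pairR v n = 1) ∧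
      K = hull ℝ (S : Set (Fin d → ℝ)) := by
  obtain ⟨-, ⟨S, hS, rfl⟩, -⟩ := hK
  exact ⟨S, hS, (coe_hull_finset S).symm⟩

lemma mem_of_forall_mem_dualCone (hK : IsGorensteinCone K n) {x : Fin d → ℝ}
    (hx : ∀ m ∈ dualCone K, 0 ≤ pairR x m) : x ∈ K := by
  obtain ⟨S, hS, rfl⟩ := hK.exists_finset_eq_hull
  refine mem_hull_finset_of_forall_nonneg (dotProductEquiv ℝ _ n).toContinuousLinearMap
    (fun v hv => by simpa [pairR_eq_dotProduct, dotProduct_comm] using (hS v hv).2)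
    fun f hf => ?_
  set m := (dotProductEquiv ℝ (Fin d)).symm f.toLinearMap
  have hfm (z : Fin d → ℝ) : f z = pairR z m := by
    rw [pairR_comm, pairR_eq_dotProduct]
    exact (LinearMap.congr_fun
      ((dotProductEquiv ℝ (Fin d)).apply_symm_apply f.toLinearMap) z).symm
  rw [hfm]
  exact hx m fun z hz => hfm z ▸ hf z hz

lemma forall_mem_dualCone_of_forall_mem_kvOne {deg : Fin d → ℝ}
    (hKv : IsGorensteinCone (dualCone K) deg) {x : Fin d → ℝ}
    (hx : ∀ n ∈ KvOne K deg, 0 ≤ pairR x n) : ∀ m ∈ dualCone K, 0 ≤ pairR x m := by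
  obtain ⟨S, hS, hKv⟩ := hKv.exists_finset_eq_hull
  intro m hm
  rw [hKv] at hm
  refine nonneg_of_mem_hull (f := dotProductEquiv ℝ _ x) (fun v hv => hx v ?_) hm
  exact ⟨(hS v hv).1, hKv ▸ subset_hull hv, pairR_comm v deg ▸ (hS v hv).2⟩

end IsGorensteinCone

theorem stmt14_general {d k r : ℕ} (K : Set (Fin d → ℝ)) (deg degVee : Fin d → ℝ)
    (hK : IsGorensteinCone K degVee) (hKv : IsGorensteinCone (dualCone K) deg)
    (s : Fin (2 * r) → (Fin d → ℝ)) (t : Fin (k - r) → (Fin d → ℝ))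
    (hs : ∀ i, s i ∈ KvOne K deg) (ht : ∀ j, t j ∈ KvOne K deg)
    (T : Set (Fin d → ℝ))
    (hT : T = (fun x => x - deg) ''
      { x | x ∈ K ∧ (∀ i, pairR x (s i) = 1) ∧ (∀ j, pairR x (t j) = 1) }) :
    T = { x | (∀ i, pairR x (s i) = 0) ∧ (∀ j, pairR x (t j) = 0) ∧
          ∀ n ∈ KvOne K deg, -1 ≤ pairR x n } := by
  subst hT
  ext y
  constructor
  · rintro ⟨x, ⟨hxK, hxs, hxt⟩, rfl⟩
    refine ⟨fun i => ?_, fun j => ?_, fun n hn => ?_⟩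
    · rw [pairR_sub_left, hxs i, (hs i).2.2, sub_self]
    · rw [pairR_sub_left, hxt j, (ht j).2.2, sub_self]
    · rw [pairR_sub_left, hn.2.2]
      linarith [hn.2.1 x hxK]
  · rintro ⟨hys, hyt, hyn⟩
    have hyK : y + deg ∈ K := hK.mem_of_forall_mem_dualCone <|
      hKv.forall_mem_dualCone_of_forall_mem_kvOne fun n hn => by
        rw [pairR_add_left, hn.2.2]
        linarith [hyn n hn]
    refine ⟨y + deg, ⟨hyK, fun i => ?_, fun j => ?_⟩, add_sub_cancel_right y deg⟩
    · rw [pairR_add_left, hys i, (hs i).2.2, zero_add]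
    · rw [pairR_add_left, hyt j, (ht j).2.2, zero_add]

/-- Suppose `deg^∨ = (1/2)(s_1 + ⋯ + s_{2r}) + t_1 + ⋯ + t_{k−r}` with
the `s_i, t_j ∈ K^∨_(1)` linearly independent, and let
`T = {x ∈ K : ⟨x, s_i⟩ = ⟨x, t_j⟩ = 1 ∀ i, j} − deg`. Then
`T = {x : ⟨x, s_i⟩ = 0 ∀ i, ⟨x, t_j⟩ = 0 ∀ j, and ⟨x, n⟩ ≥ −1 ∀ n ∈ K^∨_(1)}`. -/
theorem stmt14 {d k r : ℕ} (hrk : r ≤ k) (K : Set (Fin d → ℝ)) (deg degVee : Fin d → ℝ)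
    (hK : IsGorensteinCone K degVee) (hKv : IsGorensteinCone (dualCone K) deg)
    (hk : pairR deg degVee = (k : ℝ))
    (s : Fin (2 * r) → (Fin d → ℝ)) (t : Fin (k - r) → (Fin d → ℝ))
    (hs : ∀ i, s i ∈ KvOne K deg) (ht : ∀ j, t j ∈ KvOne K deg)
    (hli : LinearIndependent ℝ (Sum.elim s t))
    (hdec : degVee = (2⁻¹ : ℝ) • (∑ i, s i) + ∑ j, t j)
    (T : Set (Fin d → ℝ))
    (hT : T = (fun x => x - deg) ''
      { x | x ∈ K ∧ (∀ i, pairR x (s i) = 1) ∧ (∀ j, pairR x (t j) = 1) }) :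
    T = { x | (∀ i, pairR x (s i) = 0) ∧ (∀ j, pairR x (t j) = 0) ∧
          ∀ n ∈ KvOne K deg, -1 ≤ pairR x n } :=
  stmt14_general K deg degVee hK hKv s t hs ht T hT
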